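/- arXiv:1112.1145 — 7 statements merged into one kernel-verified Lean document; each statement's English description precedes it below -/
import Mathlib

section
/- Let a and b be symmetric bilinear forms on a real vector space E and let V ⊆ E be a linear subspace. Let λ, λ_h ∈ ℝ with λ ≠ 0, let u, ũ ∈ V and w ∈ E be such that a(u,v) = λ·b(u,v) for all v ∈ V, a(ũ,v) = λ_h·b(w,v) for all v ∈ V, and b(w,u) ≠ 0. Then λ_h − λ = λ·b(ũ − w, u) / b(w,u). -/
/-! Test the equation for `ũ` against `u` and the eigenvalue equation for `u` against `ũ`; symmetry
of `a` and `b` turns the two into `λ_h b(w,u) = λ b(ũ,u)`, and dividing by `b(w,u)` gives the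
identity. -/

theorem eigenvalue_mul_apply_eq_of_symm {R M : Type*} [CommRing R] [AddCommGroup M] [Module R M]
    {a b : M →ₗ[R] M →ₗ[R] R} (ha : ∀ x y, a x y = a y x) (hb : ∀ x y, b x y = b y x)
    {V : Submodule R M} {lam lamh : R} {u ut w : M} (hu : u ∈ V) (hut : ut ∈ V)
    (heig : ∀ v ∈ V, a u v = lam * b u v) (htilde : ∀ v ∈ V, a ut v = lamh * b w v) :
    lamh * b w u = lam * b ut u := by
  rw [← htilde u hu, ha, heig ut hut, hb]

theorem eigenvalue_difference_identity_general
    {E : Type*} [AddCommGroup E] [Module ℝ E]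
    (a b : E →ₗ[ℝ] E →ₗ[ℝ] ℝ)
    (ha : ∀ x y, a x y = a y x) (hb : ∀ x y, b x y = b y x)
    (V : Submodule ℝ E) (lam lamh : ℝ)
    (u ut : E) (hu : u ∈ V) (hut : ut ∈ V) (w : E)
    (heig : ∀ v ∈ V, a u v = lam * b u v)
    (htilde : ∀ v ∈ V, a ut v = lamh * b w v)
    (hwu : b w u ≠ 0) :
    lamh - lam = lam * b (ut - w) u / b w u := by
  have key := eigenvalue_mul_apply_eq_of_symm ha hb hu hut heig htilde
  rw [map_sub, LinearMap.sub_apply, eq_div_iff hwu]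
  linear_combination key

/-- Eigenvalue-difference identity (equation (3.16)): if `u` is an exact eigenfunction
with eigenvalue `lam`, `w` a discrete eigenfunction with discrete eigenvalue `lamh`, and
`ut` solves the continuous problem with right-hand side `lamh * b w ·`, then
`lamh - lam = lam * b (ut - w) u / b w u`. -/
theorem eigenvalue_difference_identity
    {E : Type*} [AddCommGroup E] [Module ℝ E]
    (a b : E →ₗ[ℝ] E →ₗ[ℝ] ℝ)
    (ha : ∀ x y, a x y = a y x) (hb : ∀ x y, b x y = b y x)
    (V : Submodule ℝ E) (lam lamh : ℝ) (hlam : lam ≠ 0)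
    (u ut : E) (hu : u ∈ V) (hut : ut ∈ V) (w : E)
    (heig : ∀ v ∈ V, a u v = lam * b u v)
    (htilde : ∀ v ∈ V, a ut v = lamh * b w v)
    (hwu : b w u ≠ 0) :
    lamh - lam = lam * b (ut - w) u / b w u :=
  eigenvalue_difference_identity_general a b ha hb V lam lamh u ut hu hut w heig htilde hwu
end

section
/- Let a_h and b be symmetric bilinear forms on a real vector space E and let V_h ⊆ E be a linear subspace. Let λ, λ_h ∈ ℝ, let u ∈ E satisfy a_h(u,u) = λ and b(u,u) = 1, let u_h ∈ V_h satisfy b(u_h,u_h) = 1 and a_h(u_h, v) = λ_h·b(u_h, v) for all v ∈ V_h, and let Π ∈ V_h satisfy a_h(u − Π, u_h) = 0. Then λ − λ_h = a_h(u − u_h, u − u_h) − λ_h·b(Π − u_h, Π − u_h) + λ_h·(b(Π, Π) − b(u, u)). -/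
/-- The expansion identity (4.2) used in Theorem 4.1: for a normalized exact eigenpair
`(lam, u)` with `a_h(u,u) = lam`, a normalized discrete eigenpair `(lamh, u_h)` and an
interpolation `Pi ∈ V_h` of `u` with `a_h(u - Pi, u_h) = 0`,
`lam - lamh = ‖u - u_h‖_h² - lamh‖Pi - u_h‖_b² + lamh(‖Pi‖_b² - ‖u‖_b²)`. -/
theorem eigenvalue_expansion_identity
    {E : Type*} [AddCommGroup E] [Module ℝ E]
    (ah b : E →ₗ[ℝ] E →ₗ[ℝ] ℝ)
    (hah : ∀ x y, ah x y = ah y x) (hb : ∀ x y, b x y = b y x)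
    (Vh : Submodule ℝ E) (lam lamh : ℝ) (u : E)
    (hu_energy : ah u u = lam) (hu_norm : b u u = 1)
    (uh : E) (huh : uh ∈ Vh) (huh_norm : b uh uh = 1)
    (huh_eig : ∀ v ∈ Vh, ah uh v = lamh * b uh v)
    (Pi : E) (hPi : Pi ∈ Vh) (horth : ah (u - Pi) uh = 0) :
    lam - lamh = ah (u - uh) (u - uh) - lamh * b (Pi - uh) (Pi - uh)
      + lamh * (b Pi Pi - b u u) := by
  have h1 : ah uh uh = lamh := by rw [huh_eig uh huh, huh_norm, mul_one]
  have h2 : ah uh Pi = lamh * b uh Pi := huh_eig Pi hPi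
  have h3 : ah u uh = ah Pi uh := by
    simp only [map_sub, LinearMap.sub_apply] at horth; linarith
  have h4 : ah Pi uh = ah uh Pi := hah Pi uh
  have h5 : ah u uh = ah uh u := hah u uh
  have h6 : b Pi uh = b uh Pi := hb Pi uh
  simp only [map_sub, LinearMap.sub_apply]
  rw [hu_norm, huh_norm]
  have h7 : ah u uh = lamh * b uh Pi := by rw [h3, h4, h2]
  have h8 : lamh * b Pi uh = lamh * b uh Pi := by rw [h6]
  linarith [h1, h5, h7, h8]
end

section
/- Let E be a real vector space, b a symmetric positive semidefinite bilinear form on E, and for each n ∈ ℕ let a_n be a symmetric positive semidefinite bilinear form on E and V_n ⊆ E a linear subspace. Let λ > 0 and u ∈ E with b(u,u) = 1 and a_n(u,u) = λ for all n. For each n let u_n ∈ V_n and λ_n ≥ 0 satisfy b(u_n,u_n) = 1 and a_n(u_n, v) = λ_n·b(u_n, v) for all v ∈ V_n, and let Π_n ∈ V_n satisfy a_n(u − Π_n, u_n) = 0. Let (h_n) be a sequence of positive reals with h_n → 0, and suppose there exist constants C > 0, c > 0 and exponents s, S, Δs, ΔS with 0 < s ≤ S ≤ 1, Δs > 0, ΔS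 > 0 such that for all n: (i) b(u − u_n, u − u_n) ≤ C·h_n^{4s}; (ii) b(u,u) − b(Π_n, Π_n) ≤ C·h_n^{2s+Δs}; (iii) b(u − Π_n, u − Π_n) ≤ C·h_n^{2(S+ΔS)}; (iv) c·h_n^{2s} ≤ a_n(u − u_n, u − u_n); and (v) λ_n ≤ C. Then there exists N ∈ ℕ such that λ_n ≤ λ for all n ≥ N. -/
/-!
Let `w = u_n` and `p = Π_n`. Testing the discrete eigenvalue equation with `w` and `p`, and using
`a(u - p, w) = 0`, gives the exact identity
`λ - λ_n = a(u - w, u - w) - λ_n (b(w - p, w - p) + b(u, u) - b(p, p))`.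
By saturation the energy term is at least `c h^{2s}`, while the bracket is bounded by
`2 b(u - w, u - w) + 2 b(u - p, u - p) + b(u, u) - b(p, p) = O(h^{4s} + h^{2(S + ΔS)} + h^{2s + Δs})`,
which is `o(h^{2s})`; with `λ_n ≤ C` the right-hand side is eventually nonnegative.
-/

open Filter Topology Asymptotics

namespace LinearMap

section CommRing

variable {R E : Type*} [CommRing R] [AddCommGroup E] [Module R E]

theorem apply_sub_sub_of_symm {B : E →ₗ[R] E →ₗ[R] R} (hB : ∀ x y, B x y = B y x) (x y : E) :
    B (x - y) (x - y) = B x x - 2 * B x y + B y y := by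
  simp only [map_sub, sub_apply]
  rw [hB y x]
  ring

theorem apply_add_add_of_symm {B : E →ₗ[R] E →ₗ[R] R} (hB : ∀ x y, B x y = B y x) (x y : E) :
    B (x + y) (x + y) = B x x + 2 * B x y + B y y := by
  simp only [map_add, add_apply]
  rw [hB y x]
  ring

theorem energy_sub_eigenvalue_mul_eq {a b : E →ₗ[R] E →ₗ[R] R}
    (ha : ∀ x y, a x y = a y x) (hb : ∀ x y, b x y = b y x) {V : Submodule R E} {μ : R}
    {u w p : E} (hw : w ∈ V) (hw_norm : b w w = 1) (hw_eig : ∀ v ∈ V, a w v = μ * b w v)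
    (hp : p ∈ V) (horth : a (u - p) w = 0) :
    a u u - μ * b u u = a (u - w) (u - w) - μ * (b (w - p) (w - p) + (b u u - b p p)) := by
  have haw : a w w = μ := by rw [hw_eig w hw, hw_norm, mul_one]
  have hauw : a u w = μ * b w p := by
    rw [map_sub, sub_apply, sub_eq_zero] at horth
    rw [horth, ha, hw_eig p hp]
  rw [apply_sub_sub_of_symm ha, apply_sub_sub_of_symm hb, haw, hauw, hw_norm]
  ring

end CommRing

section LinearOrderedRing

variable {R E : Type*} [CommRing R] [LinearOrder R] [IsStrictOrderedRing R] [AddCommGroup E]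
  [Module R E]

theorem apply_sub_sub_le {B : E →ₗ[R] E →ₗ[R] R} (hB : ∀ x y, B x y = B y x)
    (hB_nonneg : ∀ x, 0 ≤ B x x) (x y : E) :
    B (x - y) (x - y) ≤ 2 * B x x + 2 * B y y := by
  have h := hB_nonneg (x + y)
  rw [apply_add_add_of_symm hB] at h
  rw [apply_sub_sub_of_symm hB]
  linarith

theorem energy_sub_eigenvalue_mul_le {a b : E →ₗ[R] E →ₗ[R] R}
    (ha : ∀ x y, a x y = a y x) (hb : ∀ x y, b x y = b y x) (hb_nonneg : ∀ x, 0 ≤ b x x)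
    {V : Submodule R E} {μ : R} (hμ : 0 ≤ μ) {u w p : E} (hw : w ∈ V) (hw_norm : b w w = 1)
    (hw_eig : ∀ v ∈ V, a w v = μ * b w v) (hp : p ∈ V) (horth : a (u - p) w = 0) :
    a (u - w) (u - w) - μ * (2 * b (u - w) (u - w) + 2 * b (u - p) (u - p) + (b u u - b p p))
      ≤ a u u - μ * b u u := by
  have hwp : b (w - p) (w - p) ≤ 2 * b (u - p) (u - p) + 2 * b (u - w) (u - w) := by
    rw [show w - p = (u - p) - (u - w) by abel]
    exact apply_sub_sub_le hb hb_nonneg _ _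
  rw [energy_sub_eigenvalue_mul_eq ha hb hw hw_norm hw_eig hp horth]
  have := mul_le_mul_of_nonneg_left hwp hμ
  linarith

end LinearOrderedRing

end LinearMap

theorem isLittleO_rpow_of_lt {α : Type*} {l : Filter α} {h : α → ℝ}
    (hh_pos : ∀ᶠ x in l, 0 < h x) (hh : Tendsto h l (𝓝 0)) {p q : ℝ} (hpq : p < q) :
    (fun x => h x ^ q) =o[l] (fun x => h x ^ p) := by
  have hsmall : Tendsto (fun x => h x ^ (q - p)) l (𝓝 0) := by
    simpa [Real.zero_rpow (sub_pos.2 hpq).ne'] using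
      hh.rpow_const (Or.inr (sub_pos.2 hpq).le)
  refine ((isBigO_refl (fun x => h x ^ p) l).mul_isLittleO
    ((isLittleO_one_iff ℝ).2 hsmall)).congr' ?_ (by simp)
  filter_upwards [hh_pos] with x hx
  rw [← Real.rpow_add hx, add_sub_cancel]

theorem eventual_lower_bound_for_eigenvalues_general
    {E : Type*} [AddCommGroup E] [Module ℝ E]
    (b : E →ₗ[ℝ] E →ₗ[ℝ] ℝ)
    (hb_symm : ∀ x y, b x y = b y x) (hb_pos : ∀ x, 0 ≤ b x x)
    (a : ℕ → E →ₗ[ℝ] E →ₗ[ℝ] ℝ)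
    (ha_symm : ∀ n x y, a n x y = a n y x)
    (V : ℕ → Submodule ℝ E)
    (lam : ℝ) (u : E)
    (hu_norm : b u u = 1) (hu_energy : ∀ n, a n u u = lam)
    (uN : ℕ → E) (lamN : ℕ → ℝ) (PiN : ℕ → E)
    (huN : ∀ n, uN n ∈ V n) (hlamN : ∀ n, 0 ≤ lamN n)
    (huN_norm : ∀ n, b (uN n) (uN n) = 1)
    (huN_eig : ∀ n, ∀ v ∈ V n, a n (uN n) v = lamN n * b (uN n) v)
    (hPiN : ∀ n, PiN n ∈ V n)
    (horth : ∀ n, a n (u - PiN n) (uN n) = 0)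
    (h : ℕ → ℝ) (hh_pos : ∀ n, 0 < h n)
    (hh_lim : Filter.Tendsto h Filter.atTop (nhds 0))
    (C c s S Δs ΔS : ℝ) (hC : 0 < C) (hc : 0 < c)
    (hs : 0 < s) (hsS : s ≤ S) (hΔs : 0 < Δs) (hΔS : 0 < ΔS)
    (hi : ∀ n, b (u - uN n) (u - uN n) ≤ C * h n ^ (4 * s))
    (hii : ∀ n, b u u - b (PiN n) (PiN n) ≤ C * h n ^ (2 * s + Δs))
    (hiii : ∀ n, b (u - PiN n) (u - PiN n) ≤ C * h n ^ (2 * (S + ΔS)))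
    (hiv : ∀ n, c * h n ^ (2 * s) ≤ a n (u - uN n) (u - uN n))
    (hv : ∀ n, lamN n ≤ C) :
    ∃ N : ℕ, ∀ n ≥ N, lamN n ≤ lam := by
  set err : ℕ → ℝ := fun n =>
    2 * (C * h n ^ (4 * s)) + 2 * (C * h n ^ (2 * (S + ΔS))) + C * h n ^ (2 * s + Δs)
  have hgap : ∀ n, c * h n ^ (2 * s) - C * err n ≤ lam - lamN n := by
    intro n
    have key := LinearMap.energy_sub_eigenvalue_mul_le (ha_symm n) hb_symm hb_pos (hlamN n)
      (huN n) (huN_norm n) (huN_eig n) (hPiN n) (horth n)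
    rw [hu_energy n, hu_norm, mul_one] at key
    have hE : 2 * b (u - uN n) (u - uN n) + 2 * b (u - PiN n) (u - PiN n)
        + (1 - b (PiN n) (PiN n)) ≤ err n := by
      linarith [hi n, hii n, hiii n]
    have herr : 0 ≤ err n := by have := hh_pos n; positivity
    have hbound := (mul_le_mul_of_nonneg_left hE (hlamN n)).trans
      (mul_le_mul_of_nonneg_right (hv n) herr)
    linarith [hiv n]
  have hsmall : (fun n => C * err n) =o[atTop] (fun n => h n ^ (2 * s)) := by
    have hrpow {q : ℝ} (hq : 2 * s < q) := isLittleO_rpow_of_lt (.of_forall hh_pos) hh_lim hq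
    have h₁ := ((hrpow (q := 4 * s) (by linarith)).const_mul_left C).const_mul_left 2
    have h₂ := ((hrpow (q := 2 * (S + ΔS)) (by linarith)).const_mul_left C).const_mul_left 2
    have h₃ := (hrpow (q := 2 * s + Δs) (by linarith)).const_mul_left C
    exact ((h₁.add h₂).add h₃).const_mul_left C
  obtain ⟨N, hN⟩ := eventually_atTop.1 (hsmall.bound hc)
  refine ⟨N, fun n hn => ?_⟩
  have hle := (le_abs_self _).trans (hN n hn)
  rw [Real.norm_eq_abs, abs_of_pos (Real.rpow_pos_of_pos (hh_pos n) _)] at hle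
  linarith [hgap n]

/-- Abstract form of Theorem 4.1: under the error estimate (i), the (H4) estimates
(ii)–(iii), the saturation condition (iv) and the uniform bound (v), the discrete
eigenvalues eventually lie below the exact eigenvalue. -/
theorem eventual_lower_bound_for_eigenvalues
    {E : Type*} [AddCommGroup E] [Module ℝ E]
    (b : E →ₗ[ℝ] E →ₗ[ℝ] ℝ)
    (hb_symm : ∀ x y, b x y = b y x) (hb_pos : ∀ x, 0 ≤ b x x)
    (a : ℕ → E →ₗ[ℝ] E →ₗ[ℝ] ℝ)
    (ha_symm : ∀ n x y, a n x y = a n y x) (ha_pos : ∀ n x, 0 ≤ a n x x)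
    (V : ℕ → Submodule ℝ E)
    (lam : ℝ) (hlam : 0 < lam) (u : E)
    (hu_norm : b u u = 1) (hu_energy : ∀ n, a n u u = lam)
    (uN : ℕ → E) (lamN : ℕ → ℝ) (PiN : ℕ → E)
    (huN : ∀ n, uN n ∈ V n) (hlamN : ∀ n, 0 ≤ lamN n)
    (huN_norm : ∀ n, b (uN n) (uN n) = 1)
    (huN_eig : ∀ n, ∀ v ∈ V n, a n (uN n) v = lamN n * b (uN n) v)
    (hPiN : ∀ n, PiN n ∈ V n)
    (horth : ∀ n, a n (u - PiN n) (uN n) = 0)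
    (h : ℕ → ℝ) (hh_pos : ∀ n, 0 < h n)
    (hh_lim : Filter.Tendsto h Filter.atTop (nhds 0))
    (C c s S Δs ΔS : ℝ) (hC : 0 < C) (hc : 0 < c)
    (hs : 0 < s) (hsS : s ≤ S) (hS : S ≤ 1) (hΔs : 0 < Δs) (hΔS : 0 < ΔS)
    (hi : ∀ n, b (u - uN n) (u - uN n) ≤ C * h n ^ (4 * s))
    (hii : ∀ n, b u u - b (PiN n) (PiN n) ≤ C * h n ^ (2 * s + Δs))
    (hiii : ∀ n, b (u - PiN n) (u - PiN n) ≤ C * h n ^ (2 * (S + ΔS)))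
    (hiv : ∀ n, c * h n ^ (2 * s) ≤ a n (u - uN n) (u - uN n))
    (hv : ∀ n, lamN n ≤ C) :
    ∃ N : ℕ, ∀ n ≥ N, lamN n ≤ lam :=
  eventual_lower_bound_for_eigenvalues_general b hb_symm hb_pos a ha_symm V lam u hu_norm hu_energy
    uN lamN PiN huN hlamN huN_norm huN_eig hPiN horth h hh_pos hh_lim C c s S Δs ΔS hC hc hs hsS hΔs
    hΔS hi hii hiii hiv hv
end

section
/- Let K = ∏_{i=1}^n [x_i⁰ − h_i, x_i⁰ + h_i] ⊂ ℝⁿ be an axis-parallel box with center x⁰ and half side-lengths h_i > 0. Let u be a real polynomial in n variables of total degree at most 3, let v be a real polynomial of total degree at most 1, and let q be a Wilson interpolant of u on K. Then ∫_K ∇(u − q)·∇v dx = − Σ_{i=1}^n Σ_{j≠i} (h_i²/3) ∫_K (∂³u/∂x_i²∂x_j)·(∂v/∂x_j) dx. -/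
/-!
Fix a direction `j` and let `Φⱼ p = ∫_K ∂ⱼp + ∑_{i ≠ j} (hᵢ²/3) ∫_K ∂ⱼ∂ᵢ²p`. On a monomial
`∏ᵢ xᵢ^{dᵢ}` the box integrals factor into one-dimensional ones. Direction `j` contributes
`∫ ∂ⱼ(xⱼ^{dⱼ})`, the difference of the values at the two ends; if at most one exponent is `≥ 2`,
no product of two corrections survives, and each other direction `i` contributes
`∫ f + (hᵢ²/3) ∫ f''`, which for `deg f ≤ 3` equals the trapezoidal value
`hᵢ (f(x⁰ᵢ - hᵢ) + f(x⁰ᵢ + hᵢ))`. So on such monomials `Φⱼ` is `∏_{i ≠ j} hᵢ` times a signed sum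
of vertex values. Cubics and Wilson shape functions (multilinear part plus quadratic bubbles) are
spanned by such monomials, hence `Φⱼ (u - q) = 0`; since `∂ⱼ∂ᵢ²q = 0` and `∂ⱼv` is constant,
summing over `j` gives the identity.
-/

open MvPolynomial MeasureTheory
open scoped Polynomial

namespace WilsonInterpolation

theorem integral_eval_derivative (P : ℝ[X]) (a b : ℝ) :
    ∫ t in a..b, P.derivative.eval t = P.eval b - P.eval a :=
  intervalIntegral.integral_deriv_eq_sub' _ (funext fun _ => P.deriv)
    (fun _ _ => P.differentiableAt) P.derivative.continuous.continuousOn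

/-- The corrected trapezoidal rule. -/
theorem integral_eval_add_integral_eval_derivative_derivative (P : ℝ[X]) (hP : P.natDegree ≤ 3)
    (c h : ℝ) :
    (∫ t in c - h..c + h, P.eval t)
        + h ^ 2 / 3 * ∫ t in c - h..c + h, P.derivative.derivative.eval t
      = h * (P.eval (c - h) + P.eval (c + h)) := by
  apply Polynomial.induction_with_natDegree_le _ 3 _ _ _ P hP
  · simp
  · intro k r _ hk
    simp only [Polynomial.derivative_C_mul_X_pow, Polynomial.eval_mul, Polynomial.eval_C,
      Polynomial.eval_pow, Polynomial.eval_X, intervalIntegral.integral_const_mul, integral_pow]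
    interval_cases k <;> norm_num <;> ring
  · intro f g _ _ hf hg
    have hint (p : ℝ[X]) : IntervalIntegrable (fun t => p.eval t) volume (c - h) (c + h) :=
      p.continuous.intervalIntegrable _ _
    simp only [Polynomial.eval_add, map_add]
    rw [intervalIntegral.integral_add (hint f) (hint g),
      intervalIntegral.integral_add (hint _) (hint _)]
    linear_combination hf + hg

theorem setIntegral_univ_pi_Icc_prod {ι : Type*} [Fintype ι] (a b : ι → ℝ)
    (hab : ∀ i, a i ≤ b i) (f : ι → ℝ → ℝ) :
    ∫ x in Set.univ.pi (fun i => Set.Icc (a i) (b i)), ∏ i, f i (x i)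
      = ∏ i, ∫ t in a i..b i, f i t := by
  rw [volume_pi, Measure.restrict_pi_pi, integral_fintype_prod_eq_prod]
  exact Finset.prod_congr rfl fun i _ => by
    rw [intervalIntegral.integral_of_le (hab i), integral_Icc_eq_integral_Ioc]

theorem prod_apply_update {ι M : Type*} [DecidableEq ι] [CommMonoid M] {α : ι → Type*}
    (F : ∀ i, α i → M) (g : ∀ i, α i) {s : Finset ι} {i : ι} (hi : i ∈ s) (v : α i) :
    ∏ k ∈ s, F k (Function.update g i v k) = F i v * ∏ k ∈ s.erase i, F k (g k) := by
  simp_rw [Function.apply_update F, Finset.prod_update_of_mem hi, Finset.sdiff_singleton_eq_erase]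

theorem prod_add_eq_of_subsingleton {ι R : Type*} [DecidableEq ι] [CommSemiring R]
    (s : Finset ι) (f g : ι → R) (hg : {i | g i ≠ 0}.Subsingleton) :
    ∏ i ∈ s, (f i + g i) = ∏ i ∈ s, f i + ∑ i ∈ s, g i * ∏ k ∈ s.erase i, f k := by
  by_cases hs : ∃ i ∈ s, g i ≠ 0
  · obtain ⟨i, hi, hgi⟩ := hs
    have hzero : ∀ k ∈ s.erase i, g k = 0 := fun k hk =>
      not_not.mp fun hgk => Finset.ne_of_mem_erase hk (hg hgk hgi)
    rw [Finset.sum_eq_single_of_mem i hi fun k hk hki =>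
        by rw [hzero k (Finset.mem_erase.2 ⟨hki, hk⟩), zero_mul],
      ← Finset.mul_prod_erase s _ hi, ← Finset.mul_prod_erase s f hi,
      Finset.prod_congr rfl fun k hk => by rw [hzero k hk, add_zero]]
    ring
  · have hzero : ∀ k ∈ s, g k = 0 := by simpa using hs
    rw [Finset.sum_eq_zero fun k hk => by rw [hzero k hk, zero_mul], add_zero]
    exact Finset.prod_congr rfl fun k hk => by rw [hzero k hk, add_zero]

section Derivatives

variable {σ R : Type*} [CommSemiring R]

theorem pderiv_aeval_X [DecidableEq σ] (i j : σ) (f : R[X]) :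
    pderiv j (Polynomial.aeval (X i : MvPolynomial σ R) f)
      = if i = j then Polynomial.aeval (X i) f.derivative else 0 := by
  rw [Derivation.map_aeval, pderiv_X]
  split_ifs with h <;> simp [h]

theorem pderiv_eq_C_of_totalDegree_le_one {p : MvPolynomial σ R} (hp : p.totalDegree ≤ 1)
    (j : σ) : pderiv j p = C (coeff (Finsupp.single j 1) p) := by
  classical
  ext m
  rw [coeff_pderiv, coeff_C]
  rcases eq_or_ne m 0 with rfl | hm
  · simp
  · have hdeg : m.degree ≠ 0 := (Finsupp.degree_eq_zero_iff m).not.mpr hm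
    rw [if_neg (Ne.symm hm), coeff_eq_zero_of_totalDegree_lt, zero_mul]
    rw [← Finsupp.degree_apply, map_add, Finsupp.degree_single]
    omega

theorem pderiv_pderiv_eq_zero_of_degreeOf_le_one {p : MvPolynomial σ R} {i : σ}
    (hp : p.degreeOf i ≤ 1) : pderiv i (pderiv i p) = 0 := by
  classical
  ext m
  have hcoeff : coeff (m + Finsupp.single i 1 + Finsupp.single i 1) p = 0 := by
    by_contra hne
    have := degreeOf_le_iff.mp hp _ (mem_support_iff.mpr hne)
    simp at this
  rw [coeff_pderiv, coeff_pderiv, hcoeff, coeff_zero, zero_mul, zero_mul]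

theorem pderiv_pderiv_pderiv_eq_zero_of_totalDegree_le_two {p : MvPolynomial σ R}
    (hp : p.totalDegree ≤ 2) (i k j : σ) : pderiv j (pderiv k (pderiv i p)) = 0 := by
  ext m
  rw [coeff_pderiv, coeff_pderiv, coeff_pderiv, coeff_eq_zero_of_totalDegree_lt, coeff_zero,
    zero_mul, zero_mul, zero_mul]
  rw [← Finsupp.degree_apply]
  simp only [map_add, Finsupp.degree_single]
  omega

theorem totalDegree_C_mul_sq_sub_one_le {R : Type*} [CommRing R] [Nontrivial R] (a e b : R)
    (k : σ) : (C a * ((C e * (X k - C b)) ^ 2 - 1) : MvPolynomial σ R).totalDegree ≤ 2 := by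
  have hlin : (C e * (X k - C b) : MvPolynomial σ R).totalDegree ≤ 1 :=
    (totalDegree_mul _ _).trans (by simpa using (totalDegree_sub _ _).trans (by simp))
  calc _ ≤ ((C e * (X k - C b)) ^ 2 - 1 : MvPolynomial σ R).totalDegree :=
        (totalDegree_mul _ _).trans (by simp)
    _ ≤ 2 := (totalDegree_sub _ _).trans
        (max_le ((totalDegree_pow _ _).trans (by omega)) (by simp))

variable [Fintype σ]

noncomputable def prodUnivariate (P : σ → R[X]) : MvPolynomial σ R :=
  ∏ i, Polynomial.aeval (X i) (P i)

theorem eval_prodUnivariate (P : σ → R[X]) (x : σ → R) :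
    eval x (prodUnivariate P) = ∏ i, (P i).eval (x i) := by
  simp [prodUnivariate, ← coe_aeval_eq_eval, ← Polynomial.aeval_algHom_apply]

theorem monomial_one_eq_prodUnivariate (d : σ →₀ ℕ) :
    monomial d (1 : R) = prodUnivariate fun i => Polynomial.X ^ d i := by
  simp [prodUnivariate, monomial_eq, Finsupp.prod_fintype]

theorem pderiv_prodUnivariate [DecidableEq σ] (j : σ) (P : σ → R[X]) :
    pderiv j (prodUnivariate P) = prodUnivariate (Function.update P j (P j).derivative) := by
  have hrest :
      pderiv j (∏ i ∈ Finset.univ.erase j, Polynomial.aeval (X i : MvPolynomial σ R) (P i)) = 0 :=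
    Finset.prod_induction _ (fun p => pderiv j p = 0)
      (fun p r hp hr => by rw [Derivation.leibniz, hp, hr, smul_zero, smul_zero, add_zero])
      pderiv_one (fun i hi => by rw [pderiv_aeval_X, if_neg (Finset.ne_of_mem_erase hi)])
  rw [prodUnivariate, prodUnivariate, ← Finset.mul_prod_erase _ _ (Finset.mem_univ j),
    ← Finset.mul_prod_erase _ _ (Finset.mem_univ j), Derivation.leibniz, hrest, pderiv_aeval_X,
    if_pos rfl, smul_zero, zero_add, Function.update_self, smul_eq_mul, mul_comm]
  congr 1
  exact Finset.prod_congr rfl fun i hi => by rw [Function.update_of_ne (Finset.ne_of_mem_erase hi)]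

end Derivatives

variable {ι : Type*}

def wilsonExponents : Set (ι →₀ ℕ) := {d | (∀ i, d i ≤ 3) ∧ {i | 2 ≤ d i}.Subsingleton}

theorem restrictDegree_le_restrictSupport_wilsonExponents :
    restrictDegree ι ℝ 1 ≤ restrictSupport ℝ (wilsonExponents (ι := ι)) :=
  restrictSupport_mono _ fun d (hd : ∀ i, d i ≤ 1) =>
    ⟨fun i => (hd i).trans (by norm_num),
      fun i hi => absurd ((hd i).trans_lt one_lt_two) (not_lt.2 hi)⟩

variable [Fintype ι]

theorem restrictTotalDegree_le_restrictSupport_wilsonExponents :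
    restrictTotalDegree ι ℝ 3 ≤ restrictSupport ℝ (wilsonExponents (ι := ι)) := by
  refine restrictSupport_mono _ fun d (hd : d.degree ≤ 3) =>
    ⟨fun i => (d.le_degree i).trans hd, ?_⟩
  classical
  intro i (hi : 2 ≤ d i) k (hk : 2 ≤ d k)
  by_contra hne
  have hpair : d i + d k ≤ d.degree := by
    rw [Finsupp.degree_eq_sum, ← Finset.sum_pair hne]
    exact Finset.sum_le_sum_of_subset (Finset.subset_univ _)
  omega

theorem add_sum_C_mul_sq_sub_one_mem_restrictSupport {q : MvPolynomial ι ℝ}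
    (hq : ∀ i, q.degreeOf i ≤ 1) (a e b : ι → ℝ) :
    q + ∑ i, C (a i) * ((C (e i) * (X i - C (b i))) ^ 2 - 1)
      ∈ restrictSupport ℝ (wilsonExponents (ι := ι)) :=
  add_mem (restrictDegree_le_restrictSupport_wilsonExponents
      ((mem_restrictDegree _ _ _).2 fun d hd i => degreeOf_le_iff.1 (hq i) d hd))
    (sum_mem fun i _ => restrictTotalDegree_le_restrictSupport_wilsonExponents
      ((mem_restrictTotalDegree _ _ _).2 ((totalDegree_C_mul_sq_sub_one_le _ _ _ _).trans
        (by norm_num))))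

theorem pderiv_pderiv_pderiv_add_sum_C_mul_sq_sub_one {q : MvPolynomial ι ℝ}
    (hq : ∀ i, q.degreeOf i ≤ 1) (a e b : ι → ℝ) (i j : ι) :
    pderiv j (pderiv i (pderiv i (q + ∑ k, C (a k) * ((C (e k) * (X k - C (b k))) ^ 2 - 1))))
      = 0 := by
  simp only [map_add, map_sum, pderiv_pderiv_eq_zero_of_degreeOf_le_one (hq i),
    zero_add, pderiv_pderiv_pderiv_eq_zero_of_totalDegree_le_two
      (totalDegree_C_mul_sq_sub_one_le _ _ _ _), Finset.sum_const_zero]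

section Box

variable (x0 h : ι → ℝ)

abbrev box : Set (ι → ℝ) := Set.univ.pi fun i => Set.Icc (x0 i - h i) (x0 i + h i)

theorem integrableOn_box_eval (p : MvPolynomial ι ℝ) :
    IntegrableOn (fun x => eval x p) (box x0 h) :=
  (continuous_eval p).continuousOn.integrableOn_compact (isCompact_univ_pi fun _ => isCompact_Icc)

noncomputable def boxIntegral : MvPolynomial ι ℝ →ₗ[ℝ] ℝ where
  toFun p := ∫ x in box x0 h, eval x p
  map_add' p r := by
    simp only [map_add]
    exact integral_add (integrableOn_box_eval x0 h p) (integrableOn_box_eval x0 h r)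
  map_smul' c p := by simp [smul_eval, integral_const_mul]

theorem boxIntegral_apply (p : MvPolynomial ι ℝ) :
    boxIntegral x0 h p = ∫ x in box x0 h, eval x p := rfl

noncomputable def edgeIntegral (i : ι) (f : ℝ[X]) : ℝ :=
  ∫ t in x0 i - h i..x0 i + h i, f.eval t

theorem boxIntegral_prodUnivariate (hh : ∀ i, 0 ≤ h i) (P : ι → ℝ[X]) :
    boxIntegral x0 h (prodUnivariate P) = ∏ i, edgeIntegral x0 h i (P i) := by
  simp_rw [boxIntegral_apply, eval_prodUnivariate]
  exact setIntegral_univ_pi_Icc_prod (fun i => x0 i - h i) (fun i => x0 i + h i)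
    (fun i => by linarith [hh i]) fun i t => (P i).eval t

def vertex (ε : ι → Bool) : ι → ℝ := fun i => if ε i then x0 i + h i else x0 i - h i

variable [DecidableEq ι]

noncomputable def vertexFlux (j : ι) : MvPolynomial ι ℝ →ₗ[ℝ] ℝ :=
  ∑ ε : ι → Bool, (if ε j then 1 else -1 : ℝ) • (aeval (vertex x0 h ε)).toLinearMap

theorem vertexFlux_apply (j : ι) (p : MvPolynomial ι ℝ) :
    vertexFlux x0 h j p
      = ∑ ε : ι → Bool, (if ε j then 1 else -1) * eval (vertex x0 h ε) p := by
  simp only [vertexFlux, LinearMap.sum_apply, LinearMap.smul_apply,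
    AlgHom.toLinearMap_apply, smul_eq_mul]
  rfl

theorem vertexFlux_prodUnivariate (j : ι) (P : ι → ℝ[X]) :
    vertexFlux x0 h j (prodUnivariate P)
      = ((P j).eval (x0 j + h j) - (P j).eval (x0 j - h j))
        * ∏ i ∈ Finset.univ.erase j, ((P i).eval (x0 i - h i) + (P i).eval (x0 i + h i)) := by
  set g : ι → Bool → ℝ := fun i b => (if i = j then (if b then 1 else -1) else 1)
    * (P i).eval (if b then x0 i + h i else x0 i - h i)
  have hterm : ∀ ε : ι → Bool,
      (if ε j then 1 else -1) * eval (vertex x0 h ε) (prodUnivariate P) = ∏ i, g i (ε i) := by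
    intro ε
    rw [eval_prodUnivariate, Finset.prod_mul_distrib, Finset.prod_ite_eq' Finset.univ j]
    simp [vertex]
  rw [vertexFlux_apply, Finset.sum_congr rfl fun ε _ => hterm ε, ← Fintype.prod_sum,
    ← Finset.mul_prod_erase _ _ (Finset.mem_univ j)]
  congr 1
  · simp [g]; ring
  · exact Finset.prod_congr rfl fun i hi => by simp [g, Finset.ne_of_mem_erase hi, add_comm]

noncomputable def correctedFlux (j : ι) : MvPolynomial ι ℝ →ₗ[ℝ] ℝ :=
  boxIntegral x0 h ∘ₗ (pderiv j).toLinearMap + ∑ i ∈ Finset.univ.erase j, (h i ^ 2 / 3) •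
    (boxIntegral x0 h ∘ₗ (pderiv j).toLinearMap ∘ₗ (pderiv i).toLinearMap ∘ₗ
      (pderiv i).toLinearMap)

theorem correctedFlux_apply (j : ι) (p : MvPolynomial ι ℝ) :
    correctedFlux x0 h j p = boxIntegral x0 h (pderiv j p) + ∑ i ∈ Finset.univ.erase j,
      h i ^ 2 / 3 * boxIntegral x0 h (pderiv j (pderiv i (pderiv i p))) := by
  simp [correctedFlux]

theorem correctedFlux_prodUnivariate (hh : ∀ i, 0 ≤ h i) (j : ι) (P : ι → ℝ[X])
    (hdeg : ∀ i, (P i).natDegree ≤ 3) (hsub : {i | 2 ≤ (P i).natDegree}.Subsingleton) :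
    correctedFlux x0 h j (prodUnivariate P)
      = (∏ i ∈ Finset.univ.erase j, h i) * vertexFlux x0 h j (prodUnivariate P) := by
  set E := Finset.univ.erase j
  set m : ι → ℝ := fun k => edgeIntegral x0 h k (P k)
  set δ : ι → ℝ := fun k => h k ^ 2 / 3 * edgeIntegral x0 h k (P k).derivative.derivative
  have hδ : {k | δ k ≠ 0}.Subsingleton := hsub.anti fun k hk => by
    by_contra hlt
    have hP : (P k).derivative.derivative = 0 :=
      Polynomial.iterate_derivative_eq_zero (p := P k) (x := 2) (by simpa using hlt)
    exact hk (by simp [δ, hP, edgeIntegral])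
  have hfirst : boxIntegral x0 h (pderiv j (prodUnivariate P))
      = edgeIntegral x0 h j (P j).derivative * ∏ k ∈ E, m k := by
    rw [pderiv_prodUnivariate, boxIntegral_prodUnivariate x0 h hh,
      prod_apply_update _ _ (Finset.mem_univ j)]
  have hthird : ∀ i ∈ E, boxIntegral x0 h (pderiv j (pderiv i (pderiv i (prodUnivariate P))))
      = edgeIntegral x0 h j (P j).derivative
        * (edgeIntegral x0 h i (P i).derivative.derivative * ∏ k ∈ E.erase i, m k) := by
    intro i hi
    simp only [pderiv_prodUnivariate, Function.update_self, Function.update_idem,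
      Function.update_of_ne (Finset.ne_of_mem_erase hi).symm]
    rw [boxIntegral_prodUnivariate x0 h hh, prod_apply_update _ _ (Finset.mem_univ j),
      prod_apply_update _ _ hi]
  have hends : edgeIntegral x0 h j (P j).derivative
      = (P j).eval (x0 j + h j) - (P j).eval (x0 j - h j) :=
    integral_eval_derivative _ _ _
  have htrapezoid :
      ∀ k, m k + δ k = h k * ((P k).eval (x0 k - h k) + (P k).eval (x0 k + h k)) :=
    fun k => integral_eval_add_integral_eval_derivative_derivative _ (hdeg k) _ _
  calc correctedFlux x0 h j (prodUnivariate P)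
      = edgeIntegral x0 h j (P j).derivative
          * (∏ k ∈ E, m k + ∑ i ∈ E, δ i * ∏ k ∈ E.erase i, m k) := by
        rw [correctedFlux_apply, hfirst, mul_add, Finset.mul_sum]
        congr 1
        exact Finset.sum_congr rfl fun i hi => by rw [hthird i hi]; ring
    _ = edgeIntegral x0 h j (P j).derivative * ∏ k ∈ E, (m k + δ k) := by
        rw [prod_add_eq_of_subsingleton _ _ _ hδ]
    _ = _ := by
        rw [hends, Finset.prod_congr rfl fun k _ => htrapezoid k, Finset.prod_mul_distrib,
          vertexFlux_prodUnivariate]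
        ring

theorem correctedFlux_eq_of_mem_restrictSupport (hh : ∀ i, 0 ≤ h i) (j : ι)
    {p : MvPolynomial ι ℝ} (hp : p ∈ restrictSupport ℝ wilsonExponents) :
    correctedFlux x0 h j p = (∏ i ∈ Finset.univ.erase j, h i) * vertexFlux x0 h j p := by
  rw [restrictSupport_eq_span] at hp
  refine LinearMap.eqOn_span' (f := correctedFlux x0 h j)
    (g := (∏ i ∈ Finset.univ.erase j, h i) • vertexFlux x0 h j) ?_ hp
  rintro _ ⟨d, ⟨hd3, hd2⟩, rfl⟩
  dsimp only
  rw [LinearMap.smul_apply, smul_eq_mul, monomial_one_eq_prodUnivariate]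
  exact correctedFlux_prodUnivariate x0 h hh j _ (by simpa using hd3) (by simpa using hd2)

theorem boxIntegral_pderiv_eq_neg_sum (hh : ∀ i, 0 ≤ h i) {p : MvPolynomial ι ℝ}
    (hp : p ∈ restrictSupport ℝ wilsonExponents) (hvert : ∀ ε, eval (vertex x0 h ε) p = 0)
    (j : ι) :
    boxIntegral x0 h (pderiv j p) = -∑ i ∈ Finset.univ.erase j,
      h i ^ 2 / 3 * boxIntegral x0 h (pderiv j (pderiv i (pderiv i p))) := by
  have hflux := correctedFlux_eq_of_mem_restrictSupport x0 h hh j hp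
  rw [vertexFlux_apply, Finset.sum_eq_zero fun ε _ => by rw [hvert, mul_zero], mul_zero,
    correctedFlux_apply] at hflux
  exact eq_neg_of_add_eq_zero_left hflux

end Box

end WilsonInterpolation

open WilsonInterpolation in
theorem wilson_interpolation_gradient_identity_general
    (n : ℕ) (x0 hh : Fin n → ℝ) (hh_pos : ∀ i, 0 < hh i)
    (u : MvPolynomial (Fin n) ℝ) (hu : u.totalDegree ≤ 3)
    (v : MvPolynomial (Fin n) ℝ) (hv : v.totalDegree ≤ 1)
    (q q1 : MvPolynomial (Fin n) ℝ) (c : Fin n → ℝ)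
    (hq1 : ∀ i, q1.degreeOf i ≤ 1)
    (hq : q = q1 + ∑ i, MvPolynomial.C (c i) *
      ((MvPolynomial.C (hh i)⁻¹ * (MvPolynomial.X i - MvPolynomial.C (x0 i))) ^ 2 - 1))
    (hvertex : ∀ ε : Fin n → Bool,
      MvPolynomial.eval (fun i => if ε i then x0 i + hh i else x0 i - hh i) q
        = MvPolynomial.eval (fun i => if ε i then x0 i + hh i else x0 i - hh i) u) :
    (∫ x in Set.univ.pi fun j => Set.Icc (x0 j - hh j) (x0 j + hh j),
      ∑ j, MvPolynomial.eval x (MvPolynomial.pderiv j (u - q))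
        * MvPolynomial.eval x (MvPolynomial.pderiv j v))
    = - ∑ i, ∑ j ∈ Finset.univ.erase i, hh i ^ 2 / 3
        * ∫ x in Set.univ.pi fun j' => Set.Icc (x0 j' - hh j') (x0 j' + hh j'),
            MvPolynomial.eval x
              (MvPolynomial.pderiv j (MvPolynomial.pderiv i (MvPolynomial.pderiv i u)))
            * MvPolynomial.eval x (MvPolynomial.pderiv j v) := by
  have hmem : u - q ∈ restrictSupport ℝ wilsonExponents := sub_mem
    (restrictTotalDegree_le_restrictSupport_wilsonExponents ((mem_restrictTotalDegree _ _ _).2 hu))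
    (hq ▸ add_sum_C_mul_sq_sub_one_mem_restrictSupport hq1 c _ x0)
  have hflux (j : Fin n) : boxIntegral x0 hh (pderiv j (u - q)) = -∑ i ∈ Finset.univ.erase j,
      hh i ^ 2 / 3 * boxIntegral x0 hh (pderiv j (pderiv i (pderiv i u))) := by
    rw [boxIntegral_pderiv_eq_neg_sum x0 hh (fun i => (hh_pos i).le) hmem
      (fun ε => by rw [map_sub, sub_eq_zero]; exact (hvertex ε).symm)]
    simp only [hq, map_sub, pderiv_pderiv_pderiv_add_sum_C_mul_sq_sub_one hq1, sub_zero]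
  simp only [pderiv_eq_C_of_totalDegree_le_one hv, eval_C]
  rw [integral_finsetSum _ fun j _ => (integrableOn_box_eval x0 hh _).mul_const _]
  simp only [integral_mul_const, ← boxIntegral_apply, hflux]
  rw [Finset.sum_comm' (t' := Finset.univ) (s' := fun j => Finset.univ.erase j)
    (by simp [ne_comm])]
  simp only [neg_mul, Finset.sum_mul, Finset.sum_neg_distrib, mul_assoc]

/-- Lemma 5.1 of the paper: for a cubic polynomial `u`, a linear polynomial `v` and a
Wilson interpolant `q` of `u` on the axis-parallel box `K`,
`∫_K ∇(u - q)·∇v dx = - Σᵢ Σ_{j≠i} (hᵢ²/3) ∫_K ∂ᵢ²∂ⱼu · ∂ⱼv dx`. -/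
theorem wilson_interpolation_gradient_identity
    (n : ℕ) (x0 hh : Fin n → ℝ) (hh_pos : ∀ i, 0 < hh i)
    (u : MvPolynomial (Fin n) ℝ) (hu : u.totalDegree ≤ 3)
    (v : MvPolynomial (Fin n) ℝ) (hv : v.totalDegree ≤ 1)
    (q q1 : MvPolynomial (Fin n) ℝ) (c : Fin n → ℝ)
    (hq1 : ∀ i, q1.degreeOf i ≤ 1)
    (hq : q = q1 + ∑ i, MvPolynomial.C (c i) *
      ((MvPolynomial.C (hh i)⁻¹ * (MvPolynomial.X i - MvPolynomial.C (x0 i))) ^ 2 - 1))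
    (hvertex : ∀ ε : Fin n → Bool,
      MvPolynomial.eval (fun i => if ε i then x0 i + hh i else x0 i - hh i) q
        = MvPolynomial.eval (fun i => if ε i then x0 i + hh i else x0 i - hh i) u)
    (hmean : ∀ i : Fin n,
      (∫ x in Set.univ.pi fun j => Set.Icc (x0 j - hh j) (x0 j + hh j),
        MvPolynomial.eval x (MvPolynomial.pderiv i (MvPolynomial.pderiv i q)))
      = ∫ x in Set.univ.pi fun j => Set.Icc (x0 j - hh j) (x0 j + hh j),
        MvPolynomial.eval x (MvPolynomial.pderiv i (MvPolynomial.pderiv i u))) :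
    (∫ x in Set.univ.pi fun j => Set.Icc (x0 j - hh j) (x0 j + hh j),
      ∑ j, MvPolynomial.eval x (MvPolynomial.pderiv j (u - q))
        * MvPolynomial.eval x (MvPolynomial.pderiv j v))
    = - ∑ i, ∑ j ∈ Finset.univ.erase i, hh i ^ 2 / 3
        * ∫ x in Set.univ.pi fun j' => Set.Icc (x0 j' - hh j') (x0 j' + hh j'),
            MvPolynomial.eval x
              (MvPolynomial.pderiv j (MvPolynomial.pderiv i (MvPolynomial.pderiv i u)))
            * MvPolynomial.eval x (MvPolynomial.pderiv j v) :=
  wilson_interpolation_gradient_identity_general n x0 hh hh_pos u hu v hv q q1 c hq1 hq hvertex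
end

section
/- Let E be a real vector space, b a symmetric positive semidefinite bilinear form on E, a_h a symmetric bilinear form on E, and V_h ⊆ E a finite-dimensional linear subspace possessing a basis u_1, …, u_N with b(u_i, u_j) = δ_{ij} and such that a_h(u_j, v) = λ_j·b(u_j, v) for all v ∈ V_h, where λ_1, …, λ_N ∈ ℝ. Let λ > 0, d > 0 and ℓ ∈ {1, …, N} satisfy λ ≤ d·|λ_j − λ| for all j ≠ ℓ. Let u ∈ E with b(u,u) = 1, and let P ∈ V_h satisfy a_h(P, v) = λ·b(u, v) for all v ∈ V_h. If β := b(P, u_ℓ) ≥ 0, then b(u − u_ℓ, u − u_ℓ)^{1/2} ≤ 2·(1 + d)·b(u − P, u − P)^{1/2}. -/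
/-!
Write `P = ∑ⱼ aⱼ uⱼ` with `aⱼ = b(P, uⱼ)`. Testing the quasi-Ritz equation against `uⱼ` and using
`a_h(uⱼ, ·) = λⱼ b(uⱼ, ·)` gives `λ b(u - P, uⱼ) = (λⱼ - λ) aⱼ`, so eigenvalue separation yields
`|aⱼ| ≤ d |b(u - P, uⱼ)|` for `j ≠ ℓ`. By orthonormality and Bessel's inequality the part of `P`
off `u_ℓ` then has seminorm at most `d ‖u - P‖`, whence `‖u - β u_ℓ‖ ≤ (1 + d) ‖u - P‖`. Finally,
for unit vectors `u`, `v` and `β ≥ 0` one has `|β - 1| ≤ ‖u - β v‖`, hence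
`‖u - v‖ ≤ 2 ‖u - β v‖`. All of this happens in the seminormed inner product space that `b`
induces on `E`.
-/

open Finset

theorem norm_sub_le_two_mul_norm_sub_smul {F : Type*} [SeminormedAddCommGroup F]
    [NormedSpace ℝ F] {u v : F} (hu : ‖u‖ = 1) (hv : ‖v‖ = 1) {β : ℝ} (hβ : 0 ≤ β) :
    ‖u - v‖ ≤ 2 * ‖u - β • v‖ := by
  have hβv : ‖β • v‖ = β := by rw [norm_smul, hv, mul_one, Real.norm_of_nonneg hβ]
  have hsmul_sub : ‖β • v - v‖ = |β - 1| := by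
    rw [show β • v - v = (β - 1) • v by rw [sub_smul, one_smul], norm_smul, hv, mul_one,
      Real.norm_eq_abs]
  have hβ_sub_one : |β - 1| ≤ ‖u - β • v‖ := by
    simpa [hβv, hu, norm_sub_rev u] using abs_norm_sub_norm_le (β • v) u
  calc ‖u - v‖ ≤ ‖u - β • v‖ + ‖β • v - v‖ := norm_sub_le_norm_sub_add_norm_sub _ _ _
    _ ≤ 2 * ‖u - β • v‖ := by linarith

theorem abs_le_mul_abs_of_mul_eq_sub_mul {lam μ d x a : ℝ} (hlam : 0 < lam)
    (hsep : lam ≤ d * |μ - lam|) (h : lam * x = (μ - lam) * a) : |a| ≤ d * |x| := by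
  refine le_of_mul_le_mul_left ?_ hlam
  calc lam * |a| ≤ d * |μ - lam| * |a| := mul_le_mul_of_nonneg_right hsep (abs_nonneg a)
    _ = lam * (d * |x|) := by
      rw [mul_assoc, ← abs_mul, ← h, abs_mul, abs_of_pos hlam]; ring

section InnerProductSpace

variable {F : Type*} [SeminormedAddCommGroup F] [InnerProductSpace ℝ F]
  {ι : Type*} [Fintype ι] [DecidableEq ι] {v : ι → F}

open scoped InnerProductSpace

theorem Orthonormal.norm_sub_inner_smul_le (hv : Orthonormal ℝ v) {P : F}
    (hP : P ∈ Submodule.span ℝ (Set.range v)) (l : ι) (e : F) {d : ℝ} (hd : 0 ≤ d)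
    (hcoef : ∀ j ≠ l, |⟪v j, P⟫_ℝ| ≤ d * |⟪v j, e⟫_ℝ|) :
    ‖P - ⟪v l, P⟫_ℝ • v l‖ ≤ d * ‖e‖ := by
  obtain ⟨a, rfl⟩ := (Submodule.mem_span_range_iff_exists_fun ℝ).mp hP
  simp only [hv.inner_right_fintype] at hcoef ⊢
  have hoff : ∑ i, a i • v i - a l • v l = ∑ i ∈ univ.erase l, a i • v i := by
    rw [← sum_erase_add _ _ (mem_univ l), add_sub_cancel_right]
  have hnorm_sq : ‖∑ i ∈ univ.erase l, a i • v i‖ ^ 2 = ∑ i ∈ univ.erase l, a i ^ 2 := by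
    rw [← real_inner_self_eq_norm_sq, hv.inner_sum]
    simp [sq]
  have hbessel : ∑ i ∈ univ.erase l, ⟪v i, e⟫_ℝ ^ 2 ≤ ‖e‖ ^ 2 := by
    simpa [Real.norm_eq_abs, sq_abs] using hv.sum_inner_products_le e (s := univ.erase l)
  rw [hoff]
  refine le_of_pow_le_pow_left₀ two_ne_zero (by positivity) ?_
  calc ‖∑ i ∈ univ.erase l, a i • v i‖ ^ 2 = ∑ i ∈ univ.erase l, a i ^ 2 := hnorm_sq
    _ ≤ ∑ i ∈ univ.erase l, d ^ 2 * ⟪v i, e⟫_ℝ ^ 2 := by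
      refine sum_le_sum fun i hi => ?_
      rw [← sq_abs, ← sq_abs ⟪v i, e⟫_ℝ, ← mul_pow]
      exact pow_le_pow_left₀ (abs_nonneg _) (hcoef i (ne_of_mem_erase hi)) 2
    _ ≤ (d * ‖e‖) ^ 2 := by
      rw [← mul_sum, mul_pow]; exact mul_le_mul_of_nonneg_left hbessel (sq_nonneg d)

theorem Orthonormal.norm_sub_le_of_abs_inner_le (hv : Orthonormal ℝ v) {u P : F} (hu : ‖u‖ = 1)
    (hP : P ∈ Submodule.span ℝ (Set.range v)) (l : ι) (hβ : 0 ≤ ⟪v l, P⟫_ℝ) {d : ℝ} (hd : 0 ≤ d)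
    (hcoef : ∀ j ≠ l, |⟪v j, P⟫_ℝ| ≤ d * |⟪v j, u - P⟫_ℝ|) :
    ‖u - v l‖ ≤ 2 * (1 + d) * ‖u - P‖ := by
  have hoff := hv.norm_sub_inner_smul_le hP l (u - P) hd hcoef
  calc ‖u - v l‖ ≤ 2 * ‖u - ⟪v l, P⟫_ℝ • v l‖ :=
        norm_sub_le_two_mul_norm_sub_smul hu (hv.norm_eq_one l) hβ
    _ ≤ 2 * (‖u - P‖ + ‖P - ⟪v l, P⟫_ℝ • v l‖) := by
        gcongr; exact norm_sub_le_norm_sub_add_norm_sub _ _ _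
    _ ≤ 2 * (1 + d) * ‖u - P‖ := by linarith

end InnerProductSpace

abbrev LinearMap.BilinForm.preInnerProductSpaceCore {E : Type*} [AddCommGroup E] [Module ℝ E]
    (b : LinearMap.BilinForm ℝ E) (hsymm : ∀ x y, b x y = b y x) (hpos : ∀ x, 0 ≤ b x x) :
    PreInnerProductSpace.Core ℝ E where
  inner x y := b x y
  conj_inner_symm x y := hsymm y x
  re_inner_nonneg := hpos
  add_left x y z := by simp
  smul_left x y r := by simp

/-- Abstract content of Theorem 3.1: with a `b`-orthonormal basis `uu` of the discrete
space `V_h` of discrete eigenfunctions, eigenvalue separation, a normalized `u`, a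
quasi-Ritz projection `P` of `u` and `b(P, uu ℓ) ≥ 0`, the `b`-seminorm error of the
discrete eigenfunction is controlled by that of the projection. -/
theorem abstract_L2_eigenfunction_estimate
    {E : Type*} [AddCommGroup E] [Module ℝ E]
    (b ah : E →ₗ[ℝ] E →ₗ[ℝ] ℝ)
    (hb_symm : ∀ x y, b x y = b y x) (hb_pos : ∀ x, 0 ≤ b x x)
    (hah_symm : ∀ x y, ah x y = ah y x)
    (Vh : Submodule ℝ E) (N : ℕ) (uu : Fin N → E)
    (huu_mem : ∀ j, uu j ∈ Vh)
    (huu_span : Vh = Submodule.span ℝ (Set.range uu))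
    (huu_orth : ∀ i j, b (uu i) (uu j) = if i = j then 1 else 0)
    (lams : Fin N → ℝ)
    (heig : ∀ j, ∀ v ∈ Vh, ah (uu j) v = lams j * b (uu j) v)
    (lam d : ℝ) (hlam : 0 < lam) (hd : 0 < d) (l : Fin N)
    (hsep : ∀ j, j ≠ l → lam ≤ d * |lams j - lam|)
    (u : E) (hu_norm : b u u = 1)
    (P : E) (hP : P ∈ Vh)
    (hPdef : ∀ v ∈ Vh, ah P v = lam * b u v)
    (hβ : 0 ≤ b P (uu l)) :
    Real.sqrt (b (u - uu l) (u - uu l))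
      ≤ 2 * (1 + d) * Real.sqrt (b (u - P) (u - P)) := by
  let core := LinearMap.BilinForm.preInnerProductSpaceCore b hb_symm hb_pos
  let : SeminormedAddCommGroup E := InnerProductSpace.Core.toSeminormedAddCommGroup (𝕜 := ℝ)
  let : InnerProductSpace ℝ E := InnerProductSpace.ofCore core
  have hgalerkin : ∀ j, lam * b (uu j) (u - P) = (lams j - lam) * b (uu j) P := fun j => by
    have h := hPdef (uu j) (huu_mem j)
    rw [hah_symm, heig j P hP, hb_symm u] at h
    rw [map_sub]
    linarith
  -- In this structure `‖x‖ = √(b x x)` and `⟪x, y⟫_ℝ = b x y` hold by `rfl`.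
  have hu : ‖u‖ = 1 := by
    change √(b u u) = 1
    rw [hu_norm, Real.sqrt_one]
  exact (orthonormal_iff_ite.mpr huu_orth).norm_sub_le_of_abs_inner_le hu (huu_span ▸ hP) l
    (by rwa [hb_symm] at hβ : 0 ≤ b (uu l) P) hd.le
    fun j hj => abs_le_mul_abs_of_mul_eq_sub_mul hlam (hsep j hj) (hgalerkin j)
end

section
/- Let X be a real normed space, Y ⊆ X a linear subspace equipped with a seminorm |·|_Y, and for f ∈ X, t ≥ 0 define the K-functional K(f,t) := inf_{g ∈ Y} (‖f − g‖_X + t·|g|_Y). Let α > 0, C ≥ 0, B ≥ 0, u ∈ X, and let (φ_k)_{k ≥ 0} be a sequence in Y with φ_0 = 0 such that ‖u − φ_k‖_X ≤ C·2^{−αk} for all k ≥ 0 and |φ_k − φ_{k−1}|_Y ≤ B·2^{αk}·‖φ_k − φ_{k−1}‖_X for all k ≥ 1. Then for every ℓ ≥ 0, K(u, 2^{−αℓ}) ≤ (C + B·C·(1 + 2^α))·(1 + ℓ)·2^{−αℓ}. -/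
/-- K-functional estimate of Appendix B (Jackson–Bernstein argument): if `φ_k ∈ Y`
approximate `u` at rate `C·2^(-αk)` (Jackson) and satisfy the Bernstein-type inverse
inequality `|φ_k - φ_{k-1}|_Y ≤ B·2^(αk)·‖φ_k - φ_{k-1}‖`, then
`K(u, 2^(-αℓ)) ≤ (C + B·C·(1 + 2^α))·(1 + ℓ)·2^(-αℓ)`. -/
theorem K_functional_estimate
    {X : Type*} [NormedAddCommGroup X] [NormedSpace ℝ X]
    (Y : Submodule ℝ X) (pY : X → ℝ)
    (hpY_smul : ∀ g ∈ Y, ∀ c : ℝ, pY (c • g) = |c| * pY g)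
    (hpY_add : ∀ g ∈ Y, ∀ g' ∈ Y, pY (g + g') ≤ pY g + pY g')
    (α C B : ℝ) (hα : 0 < α) (hC : 0 ≤ C) (hB : 0 ≤ B)
    (u : X) (φ : ℕ → X) (hφY : ∀ k, φ k ∈ Y) (hφ0 : φ 0 = 0)
    (hJackson : ∀ k : ℕ, ‖u - φ k‖ ≤ C * (2 : ℝ) ^ (-(α * k)))
    (hBernstein : ∀ k : ℕ, 1 ≤ k →
      pY (φ k - φ (k - 1)) ≤ B * (2 : ℝ) ^ (α * k) * ‖φ k - φ (k - 1)‖) :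
    ∀ l : ℕ,
      sInf {r : ℝ | ∃ g ∈ Y, r = ‖u - g‖ + (2 : ℝ) ^ (-(α * l)) * pY g}
        ≤ (C + B * C * (1 + (2 : ℝ) ^ α)) * (1 + (l : ℝ)) * (2 : ℝ) ^ (-(α * l)) := by
  intro l
  have two_pos : (0:ℝ) < 2 := by norm_num
  have hpY0 : pY 0 = 0 := by
    have := hpY_smul 0 (Submodule.zero_mem Y) 0
    simpa using this
  have hpY_nonneg : ∀ g ∈ Y, 0 ≤ pY g := by
    intro g hg
    have hneg : pY (-g) = pY g := by
      have := hpY_smul g hg (-1)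
      simpa using this
    have h := hpY_add g hg (-g) (Submodule.neg_mem Y hg)
    simp [hpY0, hneg] at h
    linarith
  set M := B * C * (1 + (2:ℝ)^(α:ℝ)) with hM
  have hMnn : 0 ≤ M := by
    have h1 : (0:ℝ) ≤ 1 + (2:ℝ)^(α:ℝ) := by positivity
    rw [hM]; positivity
  have key : ∀ n : ℕ, pY (φ n) ≤ n * M := by
    intro n
    induction n with
    | zero => simp [hφ0, hpY0]
    | succ n ih =>
      have hmem : φ (n+1) - φ n ∈ Y := Submodule.sub_mem Y (hφY _) (hφY _)
      have h1 : pY (φ (n+1)) ≤ pY (φ (n+1) - φ n) + pY (φ n) := by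
        have := hpY_add _ hmem _ (hφY n)
        simpa using this
      have hB' := hBernstein (n+1) (by omega)
      simp only [Nat.add_sub_cancel] at hB'
      have hnorm : ‖φ (n+1) - φ n‖
          ≤ C * (2:ℝ)^(-(α*((n:ℝ)+1))) + C * (2:ℝ)^(-(α*(n:ℝ))) := by
        calc ‖φ (n+1) - φ n‖ = ‖(φ (n+1) - u) + (u - φ n)‖ := by abel_nf
          _ ≤ ‖φ (n+1) - u‖ + ‖u - φ n‖ := norm_add_le _ _
          _ = ‖u - φ (n+1)‖ + ‖u - φ n‖ := by rw [norm_sub_rev]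
          _ ≤ C * (2:ℝ)^(-(α*((n:ℝ)+1))) + C * (2:ℝ)^(-(α*(n:ℝ))) := by
              have j1 := hJackson (n+1)
              have j2 := hJackson n
              push_cast at j1
              exact add_le_add j1 j2
      have hpow_pos : (0:ℝ) < (2:ℝ)^(α*((n:ℝ)+1)) := Real.rpow_pos_of_pos two_pos _
      have h2 : pY (φ (n+1) - φ n)
          ≤ B * (2:ℝ)^(α*((n:ℝ)+1)) * (C * (2:ℝ)^(-(α*((n:ℝ)+1))) + C * (2:ℝ)^(-(α*(n:ℝ)))) := by
        have hB'' : pY (φ (n+1) - φ n) ≤ B * (2:ℝ)^(α*((n:ℝ)+1)) * ‖φ (n+1) - φ n‖ := by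
          push_cast at hB'
          exact hB'
        calc pY (φ (n+1) - φ n) ≤ B * (2:ℝ)^(α*((n:ℝ)+1)) * ‖φ (n+1) - φ n‖ := hB''
          _ ≤ _ := by
              apply mul_le_mul_of_nonneg_left hnorm
              positivity
      have e1 : (2:ℝ)^(α*((n:ℝ)+1)) * (2:ℝ)^(-(α*((n:ℝ)+1))) = 1 := by
        rw [← Real.rpow_add two_pos]; simp
      have e2 : (2:ℝ)^(α*((n:ℝ)+1)) * (2:ℝ)^(-(α*(n:ℝ))) = (2:ℝ)^(α:ℝ) := by
        rw [← Real.rpow_add two_pos]; ring_nf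
      have hcalc : B * (2:ℝ)^(α*((n:ℝ)+1)) *
          (C * (2:ℝ)^(-(α*((n:ℝ)+1))) + C * (2:ℝ)^(-(α*(n:ℝ)))) = M := by
        rw [hM]; linear_combination (B*C) * e1 + (B*C) * e2
      rw [hcalc] at h2
      push_cast
      linarith
  have hbdd : BddBelow {r : ℝ | ∃ g ∈ Y, r = ‖u - g‖ + (2:ℝ)^(-(α*(l:ℝ))) * pY g} := by
    refine ⟨0, fun r hr => ?_⟩
    obtain ⟨g, hg, rfl⟩ := hr
    have h1 : (0:ℝ) ≤ (2:ℝ)^(-(α*(l:ℝ))) := le_of_lt (Real.rpow_pos_of_pos two_pos _)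
    have h2 := hpY_nonneg g hg
    positivity
  have hmem : ‖u - φ l‖ + (2:ℝ)^(-(α*(l:ℝ))) * pY (φ l)
      ∈ {r : ℝ | ∃ g ∈ Y, r = ‖u - g‖ + (2:ℝ)^(-(α*(l:ℝ))) * pY g} :=
    ⟨φ l, hφY l, rfl⟩
  have hle := csInf_le hbdd hmem
  have hpl : (0:ℝ) < (2:ℝ)^(-(α*(l:ℝ))) := Real.rpow_pos_of_pos two_pos _
  have hchain : ‖u - φ l‖ + (2:ℝ)^(-(α*(l:ℝ))) * pY (φ l)
      ≤ (C + M) * (1 + (l:ℝ)) * (2:ℝ)^(-(α*(l:ℝ))) := by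
    have j := hJackson l
    have k := key l
    have hk : (2:ℝ)^(-(α*(l:ℝ))) * pY (φ l) ≤ (2:ℝ)^(-(α*(l:ℝ))) * ((l:ℝ) * M) :=
      mul_le_mul_of_nonneg_left k (le_of_lt hpl)
    have hfin : C + (l:ℝ) * M ≤ (C + M) * (1 + (l:ℝ)) := by
      have hl0 : (0:ℝ) ≤ (l:ℝ) := Nat.cast_nonneg l
      nlinarith
    nlinarith
  calc sInf {r : ℝ | ∃ g ∈ Y, r = ‖u - g‖ + (2:ℝ)^(-(α*(l:ℝ))) * pY g}
      ≤ ‖u - φ l‖ + (2:ℝ)^(-(α*(l:ℝ))) * pY (φ l) := hle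
    _ ≤ (C + M) * (1 + (l:ℝ)) * (2:ℝ)^(-(α*(l:ℝ))) := hchain
end

section
/- Let K = ∏_{i=1}^n [a_i, b_i] ⊂ ℝⁿ be an axis-parallel box with a_i < b_i, and let w : ℝⁿ → ℝ be continuously differentiable. Suppose that ∫_K w dx = 0 and that for each i = 1, …, n and each of the two faces F_i^± = {x ∈ K : x_i = a_i} and {x ∈ K : x_i = b_i}, the integral of w over that face with respect to (n−1)-dimensional Lebesgue measure is zero. Then for all real constants c_1, …, c_n and d_1, …, d_n, ∫_K Σ_{i=1}^n (c_i + d_i·x_i)·(∂w/∂x_i)(x) dx = 0. -/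
/-!
Integrate the `i`-th summand first along the `i`-th coordinate. Integration by parts in that
variable turns `∫ (cᵢ + dᵢ t) ∂ᵢw dt` into the boundary values of `(cᵢ + dᵢ t) w` on the two
faces orthogonal to `eᵢ`, minus `dᵢ ∫ w dt`. Integrating over the remaining coordinates, the
boundary terms become constant multiples of the face integrals of `w`, and the last term becomes
`dᵢ` times its integral over the box; all of these vanish by hypothesis.
-/

open MeasureTheory Set

namespace MeasurableEquiv

variable {ι : Type*} [DecidableEq ι] (i : ι) (β : Type*) [MeasurableSpace β]

def funSplitAt : (ι → β) ≃ᵐ β × ({j // j ≠ i} → β) :=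
  (piEquivPiSubtypeProd (fun _ => β) (· = i)).trans ((piUnique _).prodCongr (.refl _))

variable {i β}

@[simp]
theorem funSplitAt_symm_apply (p : β × ({j // j ≠ i} → β)) :
    (funSplitAt i β).symm p = fun j => if h : j = i then p.1 else p.2 ⟨j, h⟩ := by
  ext j
  by_cases h : j = i
  · subst h; rfl
  · rfl

theorem funSplitAt_symm_eq_update (t s : β) (y : {j // j ≠ i} → β) :
    (funSplitAt i β).symm (t, y) = Function.update ((funSplitAt i β).symm (s, y)) i t := by
  ext j
  by_cases h : j = i
  · subst h; simp
  · simp [h]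

@[simp]
theorem funSplitAt_symm_apply_self (t : β) (y : {j // j ≠ i} → β) :
    (funSplitAt i β).symm (t, y) i = t := by
  simp

theorem continuous_funSplitAt_symm [TopologicalSpace β] : Continuous (funSplitAt i β).symm := by
  rw [show ⇑(funSplitAt i β).symm = _ from funext funSplitAt_symm_apply]
  exact continuous_pi fun j => by split_ifs <;> fun_prop

theorem preimage_funSplitAt_prod_univ_pi (s : ι → Set β) :
    funSplitAt i β ⁻¹' (s i ×ˢ univ.pi fun j : {j // j ≠ i} => s j) = univ.pi s := by
  ext x
  simp only [mem_preimage, mem_prod, mem_univ_pi]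
  refine ⟨fun h j => ?_, fun h => ⟨h i, fun j => h j⟩⟩
  by_cases hj : j = i
  · subst hj; exact h.1
  · exact h.2 ⟨j, hj⟩

end MeasurableEquiv

open MeasurableEquiv

theorem MeasurableEquiv.volume_preserving_funSplitAt {ι : Type*} [Fintype ι] [DecidableEq ι]
    {i : ι} {β : Type*} [MeasureSpace β] [SigmaFinite (volume : Measure β)] :
    MeasurePreserving (funSplitAt i β) := by
  -- the two library lemmas must see the same `Fintype` instance on `{j // j = i}`
  let : Fintype {j // j = i} := Subtype.fintype _
  exact ((volume_preserving_piUnique _).prod (MeasurePreserving.id _)).comp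
    (volume_preserving_piEquivPiSubtypeProd _ _)

theorem setIntegral_univ_pi_eq_setIntegral_setIntegral_funSplitAt {ι : Type*} [Fintype ι]
    [DecidableEq ι] {β : Type*} [MeasureSpace β] [SigmaFinite (volume : Measure β)]
    {E : Type*} [NormedAddCommGroup E] [NormedSpace ℝ E] (i : ι) {s : ι → Set β}
    {f : (ι → β) → E} (hf : IntegrableOn f (univ.pi s)) :
    ∫ x in univ.pi s, f x =
      ∫ y in univ.pi fun j : {j // j ≠ i} => s j,
        ∫ t in s i, f ((funSplitAt i β).symm (t, y)) := by
  set e := funSplitAt i β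
  set S := s i ×ˢ univ.pi fun j : {j // j ≠ i} => s j
  have he : MeasurePreserving e := volume_preserving_funSplitAt
  have hS : e ⁻¹' S = univ.pi s := preimage_funSplitAt_prod_univ_pi s
  have hfe : (f ∘ e.symm) ∘ e = f := by ext x; simp
  have hint : Integrable (f ∘ e.symm) ((volume.restrict (s i)).prod
      (volume.restrict (univ.pi fun j : {j // j ≠ i} => s j))) := by
    rwa [Measure.prod_restrict, ← Measure.volume_eq_prod, ← IntegrableOn,
      ← he.integrableOn_comp_preimage e.measurableEmbedding, hfe, hS]
  calc ∫ x in univ.pi s, f x = ∫ x in e ⁻¹' S, (f ∘ e.symm) (e x) := by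
        rw [hS]; simp
    _ = ∫ z in S, (f ∘ e.symm) z := he.setIntegral_preimage_emb e.measurableEmbedding _ _
    _ = _ := by
      rw [Measure.volume_eq_prod, ← Measure.prod_restrict]
      exact integral_prod_symm _ hint

theorem integral_Icc_affine_mul_deriv {a b : ℝ} (hab : a ≤ b) (c d : ℝ) {g g' : ℝ → ℝ}
    (hg : ∀ t ∈ Icc a b, HasDerivAt g (g' t) t) (hg' : IntervalIntegrable g' volume a b) :
    ∫ t in Icc a b, (c + d * t) * g' t =
      (c + d * b) * g b - (c + d * a) * g a - d * ∫ t in Icc a b, g t := by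
  have hIcc : ∀ f : ℝ → ℝ, ∫ t in Icc a b, f t = ∫ t in a..b, f t := fun f => by
    rw [intervalIntegral.integral_of_le hab, integral_Icc_eq_integral_Ioc]
  have haffine : ∀ t ∈ uIcc a b, HasDerivAt (fun t => c + d * t) d t := fun t _ => by
    simpa using ((hasDerivAt_id t).const_mul d).const_add c
  rw [hIcc, hIcc, ← intervalIntegral.integral_const_mul]
  exact intervalIntegral.integral_mul_deriv_eq_deriv_mul haffine
    (by rwa [uIcc_of_le hab]) intervalIntegrable_const hg'

theorem hasDerivAt_comp_funSplitAt_symm {ι : Type*} [Fintype ι] [DecidableEq ι]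
    {F : Type*} [NormedAddCommGroup F] [NormedSpace ℝ F] {w : (ι → ℝ) → F}
    (hw : Differentiable ℝ w) (i : ι) (y : {j // j ≠ i} → ℝ) (t : ℝ) :
    HasDerivAt (fun t => w ((funSplitAt i ℝ).symm (t, y)))
      (fderiv ℝ w ((funSplitAt i ℝ).symm (t, y)) (Pi.single i 1)) t := by
  have hline : HasDerivAt (fun t => (funSplitAt i ℝ).symm (t, y)) (Pi.single i 1) t := by
    convert hasDerivAt_update ((funSplitAt i ℝ).symm (0, y)) i t using 1
    exact funext fun s => funSplitAt_symm_eq_update s 0 y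
  exact (hw _).hasFDerivAt.comp_hasDerivAt t hline

theorem setIntegral_univ_pi_Icc_affine_mul_fderiv {ι : Type*} [Fintype ι] [DecidableEq ι]
    {a b : ι → ℝ} {i : ι} (hab : a i ≤ b i) {w : (ι → ℝ) → ℝ} (hw : ContDiff ℝ 1 w) (c d : ℝ) :
    ∫ x in univ.pi fun j => Icc (a j) (b j), (c + d * x i) * fderiv ℝ w x (Pi.single i 1) =
      (c + d * b i) * (∫ y in univ.pi fun j : {j // j ≠ i} => Icc (a j) (b j),
          w ((funSplitAt i ℝ).symm (b i, y))) -
        (c + d * a i) * (∫ y in univ.pi fun j : {j // j ≠ i} => Icc (a j) (b j),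
          w ((funSplitAt i ℝ).symm (a i, y))) -
        d * ∫ x in univ.pi fun j => Icc (a j) (b j), w x := by
  set face := univ.pi fun j : {j // j ≠ i} => Icc (a j) (b j)
  have hface_compact : IsCompact face := isCompact_univ_pi fun _ => isCompact_Icc
  have hw' : Differentiable ℝ w := hw.differentiable one_ne_zero
  have hdw : Continuous (fderiv ℝ w) := hw.continuous_fderiv one_ne_zero
  have hwe : Continuous fun p => w ((funSplitAt i ℝ).symm p) :=
    hw.continuous.comp continuous_funSplitAt_symm
  have hinner : ∀ y, ∫ t in Icc (a i) (b i), (c + d * (funSplitAt i ℝ).symm (t, y) i) *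
        fderiv ℝ w ((funSplitAt i ℝ).symm (t, y)) (Pi.single i 1) =
      (c + d * b i) * w ((funSplitAt i ℝ).symm (b i, y)) -
        (c + d * a i) * w ((funSplitAt i ℝ).symm (a i, y)) -
        d * ∫ t in Icc (a i) (b i), w ((funSplitAt i ℝ).symm (t, y)) := fun y => by
    simp only [funSplitAt_symm_apply_self]
    refine integral_Icc_affine_mul_deriv hab c d
      (fun t _ => hasDerivAt_comp_funSplitAt_symm hw' i y t) (Continuous.intervalIntegrable ?_ _ _)
    exact (hdw.comp (continuous_funSplitAt_symm.comp (by fun_prop))).clm_apply continuous_const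
  have hint_face : ∀ s, IntegrableOn (fun y => w ((funSplitAt i ℝ).symm (s, y))) face := fun s =>
    (hwe.comp (by fun_prop)).continuousOn.integrableOn_compact hface_compact
  have hint_inner :
      IntegrableOn (fun y => ∫ t in Icc (a i) (b i), w ((funSplitAt i ℝ).symm (t, y))) face :=
    (continuous_parametric_integral_of_continuous
      (f := fun y t => w ((funSplitAt i ℝ).symm (t, y))) (hwe.comp continuous_swap)
      isCompact_Icc).continuousOn.integrableOn_compact hface_compact
  rw [setIntegral_univ_pi_eq_setIntegral_setIntegral_funSplitAt i
      (ContinuousOn.integrableOn_compact (isCompact_univ_pi fun _ => isCompact_Icc)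
        (by fun_prop)),
    setIntegral_univ_pi_eq_setIntegral_setIntegral_funSplitAt i
      (hw.continuous.continuousOn.integrableOn_compact
        (isCompact_univ_pi fun _ => isCompact_Icc))]
  simp_rw [hinner]
  rw [integral_sub, integral_sub, integral_const_mul, integral_const_mul, integral_const_mul]
  exacts [(hint_face _).const_mul _, (hint_face _).const_mul _,
    ((hint_face _).const_mul _).sub ((hint_face _).const_mul _), hint_inner.const_mul _]

/-- Key orthogonality identity in the proof of Lemma 5.4 (condition (H4) for the enriched
nonconforming rotated Q₁ element): if `w` is C¹ with vanishing mean over the box `K` and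
vanishing mean over each face of `K`, then `∫_K Σᵢ (cᵢ + dᵢ·xᵢ)·∂ᵢw dx = 0` for all
constants `cᵢ, dᵢ`. -/
theorem box_orthogonality_identity
    (n : ℕ) (a b : Fin n → ℝ) (hab : ∀ i, a i < b i)
    (w : (Fin n → ℝ) → ℝ) (hw : ContDiff ℝ 1 w)
    (hmean : (∫ x in Set.univ.pi fun i => Set.Icc (a i) (b i), w x) = 0)
    (hface : ∀ i : Fin n, ∀ c ∈ ({a i, b i} : Set ℝ),
      (∫ y : {j : Fin n // j ≠ i} → ℝ in
          Set.univ.pi fun j => Set.Icc (a j.1) (b j.1),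
        w fun j => if h : j = i then c else y ⟨j, h⟩) = 0) :
    ∀ c d : Fin n → ℝ,
      (∫ x in Set.univ.pi fun i => Set.Icc (a i) (b i),
        ∑ i, (c i + d i * x i) * fderiv ℝ w x (Pi.single i 1)) = 0 := by
  intro c d
  have hdw : Continuous (fderiv ℝ w) := hw.continuous_fderiv one_ne_zero
  rw [integral_finsetSum _ fun i _ => ContinuousOn.integrableOn_compact
    (isCompact_univ_pi fun _ => isCompact_Icc) (by fun_prop)]
  refine Finset.sum_eq_zero fun i _ => ?_
  rw [setIntegral_univ_pi_Icc_affine_mul_fderiv (hab i).le hw, hmean]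
  simp only [funSplitAt_symm_apply, hface i (a i) (by simp), hface i (b i) (by simp)]
  ring
end
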